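/- On the Lie algebra rr₃,₀ ([f₁,f₂] = f₂) with symplectic form ω₀ = f¹² + f³⁴, the two para-complex structures K₀₁ = −E₁₁ + E₂₂ − E₃₃ + E₄₄ and K₀₂ = E₁₁ + 2yE₁₂ − E₂₂ + E₃₃ − E₄₄ (y ∈ ℝ) are not equivalent: there is no Lie algebra automorphism L of rr₃,₀ with L*ω₀ = ω₀ and L⁻¹ ∘ K₀₁ ∘ L = K₀₂. -/

import Mathlib

/-- The bracket of the Lie algebra `rr₃,₀` on `ℝ⁴` (0-indexed): only nonzero
bracket `[f₀,f₁] = f₁`. -/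
def brRR30 (u v : Fin 4 → ℝ) : Fin 4 → ℝ :=
  ![0, u 0 * v 1 - u 1 * v 0, 0, 0]

/-- The symplectic form `ω₀ = f¹² + f³⁴` (0-indexed: `f⁰¹ + f²³`). -/
def om0RR30 (u v : Fin 4 → ℝ) : ℝ :=
  u 0 * v 1 - u 1 * v 0 + (u 2 * v 3 - u 3 * v 2)

/-- `K₀₁ = −E₁₁ + E₂₂ − E₃₃ + E₄₄`. -/
def K01RR30 (u : Fin 4 → ℝ) : Fin 4 → ℝ := ![-u 0, u 1, -u 2, u 3]

/-- `K₀₂ = E₁₁ + 2yE₁₂ − E₂₂ + E₃₃ − E₄₄`: `f₁ ↦ f₁`, `f₂ ↦ 2yf₁ − f₂`,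
`f₃ ↦ f₃`, `f₄ ↦ −f₄`. -/
def K02RR30 (y : ℝ) (u : Fin 4 → ℝ) : Fin 4 → ℝ :=
  ![u 0 + 2 * y * u 1, -u 1, u 2, -u 3]

/-! `K₀₁` is `+1` on the derived algebra `[rr₃,₀, rr₃,₀] = ℝ f₂`, so any bracket-preserving `L`
intertwining `K₀₂` with `K₀₁` forces `K₀₂` to be `+1` on the derived algebra as well;
but `K₀₂ f₂ = 2y f₁ − f₂ ≠ f₂`. -/

theorem K01RR30_brRR30 (u v : Fin 4 → ℝ) : K01RR30 (brRR30 u v) = brRR30 u v := by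
  ext i; fin_cases i <;> simp [K01RR30, brRR30]

theorem K02RR30_brRR30_of_intertwines (y : ℝ) {L : (Fin 4 → ℝ) → Fin 4 → ℝ}
    (hinj : Function.Injective L) (hbr : ∀ u v, L (brRR30 u v) = brRR30 (L u) (L v))
    (hK : ∀ u, K01RR30 (L u) = L (K02RR30 y u)) (u v : Fin 4 → ℝ) :
    K02RR30 y (brRR30 u v) = brRR30 u v :=
  hinj <| by rw [← hK, hbr, K01RR30_brRR30]

theorem brRR30_f1_f2 : brRR30 ![1, 0, 0, 0] ![0, 1, 0, 0] = ![0, 1, 0, 0] := by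
  ext i; fin_cases i <;> simp [brRR30]

theorem K02RR30_f2_ne (y : ℝ) : K02RR30 y ![0, 1, 0, 0] ≠ ![0, 1, 0, 0] := by
  intro h
  have h1 := congrFun h 1
  norm_num [K02RR30] at h1

/-- On `rr₃,₀` with `ω₀ = f¹² + f³⁴`, the para-complex structures `K₀₁` and `K₀₂`
are not equivalent: no Lie algebra automorphism `L` with `L*ω₀ = ω₀` and
`L⁻¹ ∘ K₀₁ ∘ L = K₀₂` exists. -/
theorem stmt15 (y : ℝ) :
    ¬ ∃ L : (Fin 4 → ℝ) →ₗ[ℝ] (Fin 4 → ℝ),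
      Function.Bijective L ∧
      (∀ u v, L (brRR30 u v) = brRR30 (L u) (L v)) ∧
      (∀ u v, om0RR30 (L u) (L v) = om0RR30 u v) ∧
      (∀ u, K01RR30 (L u) = L (K02RR30 y u)) := by
  rintro ⟨L, hbij, hbr, -, hK⟩
  have hfix := K02RR30_brRR30_of_intertwines y hbij.injective hbr hK ![1, 0, 0, 0] ![0, 1, 0, 0]
  rw [brRR30_f1_f2] at hfix
  exact K02RR30_f2_ne y hfix
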